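/- Let μ be a modulus of continuity satisfying the Osgood condition, let φ(t) = ∫_{1/t}^1 ds/μ(s) for t ∈ [1,+∞), and define Φ(τ) = ∫₀^τ φ^{-1}(s) ds on [0,+∞). Then Φ'(τ) = φ^{-1}(τ), lim_{τ→+∞} Φ'(τ) = +∞, Φ''(τ) = (Φ'(τ))² μ(1/Φ'(τ)) for all τ ∈ [0,+∞), and lim_{τ→+∞} Φ''(τ) = +∞. -/

import Mathlib

open MeasureTheory Real Set
noncomputable section

/-- A modulus of continuity: continuous, strictly increasing, concave on `[0,1]`, vanishing at `0`. -/
structure ModCont where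
  toFun : ℝ → ℝ
  continuousOn : ContinuousOn toFun (Set.Icc 0 1)
  strictMonoOn : StrictMonoOn toFun (Set.Icc 0 1)
  concaveOn : ConcaveOn ℝ (Set.Icc 0 1) toFun
  map_zero : toFun 0 = 0

instance : CoeFun ModCont (fun _ => ℝ → ℝ) := ⟨ModCont.toFun⟩

/-- The Osgood condition `∫₀¹ ds/μ(s) = +∞`, expressed as divergence of `∫_ε^1 ds/μ(s)` as `ε → 0⁺`. -/
def ModCont.Osgood (μ : ModCont) : Prop :=
  Filter.Tendsto (fun ε : ℝ => ∫ s in ε..1, 1 / μ s) (nhdsWithin 0 (Set.Ioi 0)) Filter.atTop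

/-- The Dini-type condition `∫₀ʰ ω(t)/t dt ≤ C ω(h)` for all `h ∈ (0,1]`. -/
def DiniCond (ω : ℝ → ℝ) : Prop :=
  ∃ C > 0, ∀ h ∈ Set.Ioc (0:ℝ) 1, (∫ t in (0:ℝ)..h, ω t / t) ≤ C * ω h

/-- The technical condition `ω(2^{-q})/ω(2^{-p}) ≤ C ω(2^{p-q})` for `1 ≤ p ≤ q-1`. -/
def TechCond1 (ω : ℝ → ℝ) : Prop :=
  ∃ C > 0, ∀ p q : ℕ, 1 ≤ p → p + 1 ≤ q →
    ω ((2:ℝ)⁻¹ ^ q) / ω ((2:ℝ)⁻¹ ^ p) ≤ C * ω ((2:ℝ) ^ ((p:ℤ) - (q:ℤ)))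

/-- The technical condition `∑_{k≥0} 2^{(1-s)k} ω(2^{-k}) < ∞` for all `s ∈ (0,1)`. -/
def TechCond2 (ω : ℝ → ℝ) : Prop :=
  ∀ s ∈ Set.Ioo (0:ℝ) 1,
    Summable (fun k : ℕ => (2:ℝ) ^ ((1 - s) * (k:ℝ)) * ω ((2:ℝ)⁻¹ ^ k))

/-- The function `φ(t) = ∫_{1/t}^1 ds/μ(s)`. -/
def phiW (μ : ModCont) (t : ℝ) : ℝ := ∫ s in (1/t)..1, 1 / μ s

abbrev Euc (n : ℕ) := EuclideanSpace ℝ (Fin n)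

/-- Fourier multiplier operator `m(D)u = 𝓕⁻¹(m ⬝ 𝓕 u)`. -/
def fourierMult {n : ℕ} (m : Euc n → ℂ) (u : Euc n → ℂ) : Euc n → ℂ :=
  FourierTransformInv.fourierInv (fun ξ => m ξ * FourierTransform.fourier u ξ)

/-- Data of a Littlewood–Paley decomposition. -/
structure LPData (n : ℕ) where
  χ : Euc n → ℝ
  φ : Euc n → ℝ
  χ_smooth : ContDiff ℝ (⊤ : ℕ∞) χ
  φ_smooth : ContDiff ℝ (⊤ : ℕ∞) φ
  χ_cpt : HasCompactSupport χ
  φ_cpt : HasCompactSupport φ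
  χ_mem : ∀ ξ, χ ξ ∈ Set.Icc (0:ℝ) 1
  φ_mem : ∀ ξ, φ ξ ∈ Set.Icc (0:ℝ) 1
  φ_supp : ∀ ξ, φ ξ ≠ 0 → 3/4 ≤ ‖ξ‖ ∧ ‖ξ‖ ≤ 8/3
  χ_supp : ∀ ξ, χ ξ ≠ 0 → ‖ξ‖ ≤ 4/3
  sum_one : ∀ ξ, χ ξ + ∑' q : ℕ, φ ((2:ℝ)⁻¹ ^ q • ξ) = 1

/-- The dyadic blocks `Δ_q` (with `Δ_q = 0` for `q ≤ -2`). -/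
def LPData.Δ {n : ℕ} (D : LPData n) (q : ℤ) (u : Euc n → ℂ) : Euc n → ℂ :=
  if q = -1 then fourierMult (fun ξ => (D.χ ξ : ℂ)) u
  else if 0 ≤ q then fourierMult (fun ξ => (D.φ ((2:ℝ) ^ (-q) • ξ) : ℂ)) u
  else 0

/-- The low-frequency cut-offs `S_q = χ(2^{-q}D) = ∑_{p ≤ q-1} Δ_p` (so `S_q = 0` for `q < 0`). -/
def LPData.S {n : ℕ} (D : LPData n) (q : ℤ) (u : Euc n → ℂ) : Euc n → ℂ :=
  if 0 ≤ q then fourierMult (fun ξ => (D.χ ((2:ℝ) ^ (-q) • ξ) : ℂ)) u else 0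

/-- `L²` norm. -/
def L2N {n : ℕ} (u : Euc n → ℂ) : ℝ := (eLpNorm u 2 volume).toReal

/-- `L^∞` norm. -/
def LinfN {n : ℕ} (u : Euc n → ℂ) : ℝ := (eLpNorm u ⊤ volume).toReal

/-- `L^∞` norm of the gradient. -/
def LinfGradN {n : ℕ} (u : Euc n → ℂ) : ℝ :=
  (eLpNorm (fun x => fderiv ℝ u x) ⊤ volume).toReal

/-- `L²` norm of the gradient. -/
def GradL2N {n : ℕ} (u : Euc n → ℂ) : ℝ :=
  (eLpNorm (fun x => fderiv ℝ u x) 2 volume).toReal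

/-- Membership in `C^ω(ℝⁿ)`: bounded, with modulus of continuity `ω`. -/
def MemCω {n : ℕ} (ω : ℝ → ℝ) (a : Euc n → ℂ) : Prop :=
  (∃ M, ∀ x, ‖a x‖ ≤ M) ∧
  ∃ K, ∀ x y : Euc n, 0 < dist x y → dist x y < 1 → ‖a x - a y‖ ≤ K * ω (dist x y)

/-- The `C^ω(ℝⁿ)` norm: sup norm plus the best modulus-of-continuity constant. -/
def CωNorm {n : ℕ} (ω : ℝ → ℝ) (a : Euc n → ℂ) : ℝ :=
  (⨆ x, ‖a x‖) +
    ⨆ p : {p : Euc n × Euc n // 0 < dist p.1 p.2 ∧ dist p.1 p.2 < 1},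
      ‖a p.1.1 - a p.1.2‖ / ω (dist p.1.1 p.1.2)

/-- `Ω(q) = 2^q ω(2^{-q})`. -/
def OmegaW (ω : ℝ → ℝ) (q : ℤ) : ℝ := (2:ℝ) ^ q * ω ((2:ℝ) ^ (-q))

/-- The `q`-th summand of the squared `H^s_Ω` norm (indexing `q : ℕ ↦ q - 1 ≥ -1`). -/
def hsOmegaTerm {n : ℕ} (D : LPData n) (ω : ℝ → ℝ) (s : ℝ) (u : Euc n → ℂ) (q : ℕ) : ℝ :=
  (2:ℝ) ^ (2 * s * ((q:ℝ) - 1)) * (OmegaW ω ((q:ℤ) - 1))^2 * (L2N (D.Δ ((q:ℤ) - 1) u))^2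

/-- Membership in the weighted Sobolev space `H^s_Ω`. -/
def MemHsOmega {n : ℕ} (D : LPData n) (ω : ℝ → ℝ) (s : ℝ) (u : Euc n → ℂ) : Prop :=
  Summable (hsOmegaTerm D ω s u)

/-- The `H^s_Ω` norm. -/
def HsOmegaN {n : ℕ} (D : LPData n) (ω : ℝ → ℝ) (s : ℝ) (u : Euc n → ℂ) : ℝ :=
  Real.sqrt (∑' q : ℕ, hsOmegaTerm D ω s u q)

/-- The `q`-th summand of the squared `H^s` norm. -/
def hsTerm {n : ℕ} (D : LPData n) (s : ℝ) (u : Euc n → ℂ) (q : ℕ) : ℝ :=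
  (2:ℝ) ^ (2 * s * ((q:ℝ) - 1)) * (L2N (D.Δ ((q:ℤ) - 1) u))^2

/-- Membership in `H^s` (Littlewood–Paley characterization). -/
def MemHs {n : ℕ} (D : LPData n) (s : ℝ) (u : Euc n → ℂ) : Prop :=
  Summable (hsTerm D s u)

/-- The `H^s` norm (Littlewood–Paley characterization). -/
def HsN {n : ℕ} (D : LPData n) (s : ℝ) (u : Euc n → ℂ) : ℝ :=
  Real.sqrt (∑' q : ℕ, hsTerm D s u q)

/-- Partial derivative `∂_{x_k}` (as the `k`-th directional derivative). -/
def pd {n : ℕ} (k : Fin n) (f : Euc n → ℂ) : Euc n → ℂ :=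
  fun x => fderiv ℝ f x (EuclideanSpace.single k 1)

/-- The remainder term `𝓡_q^{(1)}(a,b) = ∑_{|q'-q|≤4} [Δ_q, S_{q'-1}a] Δ_{q'} b`. -/
def R1 {n : ℕ} (D : LPData n) (a b : Euc n → ℂ) (q : ℤ) : Euc n → ℂ :=
  fun x => ∑ q' ∈ Finset.Icc (q-4) (q+4),
    (D.Δ q (fun y => D.S (q'-1) a y * D.Δ q' b y) x - D.S (q'-1) a x * D.Δ q (D.Δ q' b) x)

/-- The remainder term `𝓡_q^{(2)}(a,b) = ∑_{|q'-q|≤4} (S_{q'-1}a − S_{q-1}a) Δ_q Δ_{q'} b`. -/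
def R2 {n : ℕ} (D : LPData n) (a b : Euc n → ℂ) (q : ℤ) : Euc n → ℂ :=
  fun x => ∑ q' ∈ Finset.Icc (q-4) (q+4),
    (D.S (q'-1) a x - D.S (q-1) a x) * D.Δ q (D.Δ q' b) x

/-- The remainder term `𝓡_q^{(3)}(a,b) = ∑_{q' > q-4} Δ_q (S_{q'+2}b · Δ_{q'} a)`. -/
def R3 {n : ℕ} (D : LPData n) (a b : Euc n → ℂ) (q : ℤ) : Euc n → ℂ :=
  fun x => ∑' q' : {m : ℤ // q - 4 < m},
    D.Δ q (fun y => D.S (q'.1 + 2) b y * D.Δ q'.1 a y) x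

/-- The divergence-form operator `v ↦ ∑_{j,k} ∂_{x_j}(S_{q-1}a_{jk} ∂_{x_k} v)`. -/
def divForm {n : ℕ} (D : LPData n) (a : Fin n → Fin n → Euc n → ℂ) (q : ℤ)
    (v : Euc n → ℂ) : Euc n → ℂ :=
  fun x => ∑ j, ∑ k, pd j (fun y => D.S (q-1) (a j k) y * pd k v y) x

/-- properties of `Φ(τ) = ∫₀^τ φ^{-1}(s) ds`, where `ψ = φ^{-1}`. -/
theorem Phi_properties (μ : ModCont) (hOsg : μ.Osgood) (ψ : ℝ → ℝ)
    (hψ₁ : ∀ s ∈ Set.Ici (0:ℝ), ψ s ∈ Set.Ici (1:ℝ) ∧ phiW μ (ψ s) = s)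
    (hψ₂ : ∀ t ∈ Set.Ici (1:ℝ), ψ (phiW μ t) = t) :
    (∀ τ ∈ Set.Ici (0:ℝ),
        HasDerivWithinAt (fun τ' => ∫ s in (0:ℝ)..τ', ψ s) (ψ τ) (Set.Ici 0) τ) ∧
    Filter.Tendsto ψ Filter.atTop Filter.atTop ∧
    (∀ τ ∈ Set.Ici (0:ℝ),
        HasDerivWithinAt ψ ((ψ τ)^2 * μ (1 / ψ τ)) (Set.Ici 0) τ) ∧
    Filter.Tendsto (fun τ => (ψ τ)^2 * μ (1 / ψ τ)) Filter.atTop Filter.atTop := by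
  clear hOsg
  -- basic positivity facts about μ
  have hμpos : ∀ x ∈ Set.Ioc (0:ℝ) 1, 0 < μ x := by
    intro x hx
    have h := μ.strictMonoOn (Set.mem_Icc.2 ⟨le_refl 0, zero_le_one⟩)
      (Set.mem_Icc.2 ⟨hx.1.le, hx.2⟩) hx.1
    rwa [μ.map_zero] at h
  have hμ1 : 0 < μ 1 := hμpos 1 ⟨one_pos, le_refl 1⟩
  -- concavity lower bound : x * μ 1 ≤ μ x for x ∈ [0,1]
  have hμlow : ∀ x ∈ Set.Icc (0:ℝ) 1, x * μ 1 ≤ μ x := by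
    intro x hx
    have h := μ.concaveOn.2 (Set.mem_Icc.2 ⟨le_rfl, zero_le_one⟩)
      (Set.mem_Icc.2 ⟨zero_le_one, le_rfl⟩) (sub_nonneg.2 hx.2) hx.1 (by ring)
    simpa [μ.map_zero, smul_eq_mul] using h
  -- integrability of 1/μ away from 0
  set g : ℝ → ℝ := fun s => 1 / μ s with hgdef
  have hgcont : ∀ ε : ℝ, 0 < ε → ContinuousOn g (Set.Icc ε 1) := by
    intro ε hε
    apply ContinuousOn.div continuousOn_const
    · exact μ.continuousOn.mono (Set.Icc_subset_Icc_left hε.le)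
    · intro x hx; exact (hμpos x ⟨hε.trans_le hx.1, hx.2⟩).ne'
  have hgint : ∀ a b : ℝ, 0 < a → 0 < b → a ≤ 1 → b ≤ 1 → IntervalIntegrable g volume a b := by
    intro a b ha hb ha1 hb1
    apply ContinuousOn.intervalIntegrable
    exact (hgcont (min a b) (lt_min ha hb)).mono
      (Set.uIcc_subset_Icc ⟨min_le_left a b, ha1⟩ ⟨min_le_right a b, hb1⟩)
  -- phiW is strictly monotone on [1, ∞)
  have hφmono : StrictMonoOn (phiW μ) (Set.Ici 1) := by
    intro a ha b hb hab
    have ha1 : (1:ℝ) ≤ a := ha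
    have hb1 : (1:ℝ) ≤ b := hb
    have hapos : (0:ℝ) < a := lt_of_lt_of_le one_pos ha1
    have hbpos : (0:ℝ) < b := lt_of_lt_of_le one_pos hb1
    have h1 : 1/b < 1/a := one_div_lt_one_div_of_lt hapos hab
    have hia : (1:ℝ)/a ≤ 1 := (div_le_one hapos).2 ha1
    have hib : (1:ℝ)/b ≤ 1 := (div_le_one hbpos).2 hb1
    have i1 : IntervalIntegrable g volume (1/b) (1/a) :=
      hgint _ _ (by positivity) (by positivity) hib hia
    have i2 : IntervalIntegrable g volume (1/a) 1 :=
      hgint _ _ (by positivity) one_pos hia le_rfl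
    have key : (∫ s in (1/b)..(1/a), g s) + phiW μ a = phiW μ b := by
      show (∫ s in (1/b)..(1/a), g s) + (∫ s in (1/a)..(1:ℝ), g s) = ∫ s in (1/b)..(1:ℝ), g s
      exact intervalIntegral.integral_add_adjacent_intervals i1 i2
    have hpos : 0 < ∫ s in (1/b)..(1/a), g s := by
      apply intervalIntegral.intervalIntegral_pos_of_pos_on i1 _ h1
      intro x hx
      have hxpos : 0 < x := lt_trans (by positivity) hx.1
      have hxle : x ≤ 1 := le_trans hx.2.le hia
      exact one_div_pos.2 (hμpos x ⟨hxpos, hxle⟩)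
    linarith
  -- phiW is nonnegative on [1, ∞)
  have hφ0 : ∀ t ∈ Set.Ici (1:ℝ), 0 ≤ phiW μ t := by
    intro t ht
    have htpos : (0:ℝ) < t := lt_of_lt_of_le one_pos ht
    apply intervalIntegral.integral_nonneg ((div_le_one htpos).2 ht)
    intro u hu
    have h0u : 0 < u := lt_of_lt_of_le (by positivity) hu.1
    have := hμpos u ⟨h0u, hu.2⟩
    positivity
  have hφ1 : phiW μ 1 = 0 := by simp [phiW]
  -- basic facts about ψ
  have hψmem : ∀ s ∈ Set.Ici (0:ℝ), (1:ℝ) ≤ ψ s := fun s hs => (hψ₁ s hs).1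
  have hψinv : ∀ s ∈ Set.Ici (0:ℝ), phiW μ (ψ s) = s := fun s hs => (hψ₁ s hs).2
  have hψ0 : ψ 0 = 1 := by
    have h1 := hψmem 0 (Set.mem_Ici.2 le_rfl)
    rcases eq_or_lt_of_le h1 with h | h
    · exact h.symm
    · exfalso
      have h2 := hφmono (Set.mem_Ici.2 le_rfl) (Set.mem_Ici.2 h1) h
      rw [hφ1, hψinv 0 (Set.mem_Ici.2 le_rfl)] at h2
      exact lt_irrefl 0 h2
  have hψmono : StrictMonoOn ψ (Set.Ici 0) := by
    intro a ha b hb hab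
    by_contra h
    push_neg at h
    have h2 := hφmono.monotoneOn (Set.mem_Ici.2 (hψmem b hb)) (Set.mem_Ici.2 (hψmem a ha)) h
    rw [hψinv a ha, hψinv b hb] at h2
    exact absurd h2 (not_le.2 hab)
  -- continuity of ψ within [0, ∞)
  have hψcontW : ∀ τ ∈ Set.Ici (0:ℝ), ContinuousWithinAt ψ (Set.Ici 0) τ := by
    intro τ hτ
    have hsr : Set.Ici (0:ℝ) ∈ nhdsWithin τ (Set.Ici τ) :=
      Filter.mem_of_superset self_mem_nhdsWithin (Set.Ici_subset_Ici.2 hτ)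
    have hright : ContinuousWithinAt ψ (Set.Ici τ) τ := by
      apply hψmono.continuousWithinAt_right_of_surjOn hsr
      intro b hb
      have hb1 : (1:ℝ) ≤ b := le_of_lt (lt_of_le_of_lt (hψmem τ hτ) hb)
      exact ⟨phiW μ b, hφ0 b hb1, hψ₂ b hb1⟩
    rcases eq_or_lt_of_le (show (0:ℝ) ≤ τ from hτ) with h | h
    · rw [← h] at hright ⊢
      exact hright
    · have hsl : Set.Ici (0:ℝ) ∈ nhdsWithin τ (Set.Iic τ) :=
        Filter.mem_of_superset (mem_nhdsWithin_of_mem_nhds (Ioi_mem_nhds h))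
          Set.Ioi_subset_Ici_self
      have hleft : ContinuousWithinAt ψ (Set.Iic τ) τ := by
        apply hψmono.continuousWithinAt_left_of_exists_between hsl
        intro b hb
        have hψτ1 : (1:ℝ) < ψ τ := by
          rw [← hψ0]; exact hψmono (Set.mem_Ici.2 le_rfl) (Set.mem_Ici.2 hτ) h
        refine ⟨phiW μ (max b 1), hφ0 _ (Set.mem_Ici.2 (le_max_right _ _)), ?_⟩
        rw [hψ₂ _ (Set.mem_Ici.2 (le_max_right _ _))]
        exact ⟨le_max_left _ _, max_lt hb hψτ1⟩
      exact (continuousAt_iff_continuous_left_right.2 ⟨hleft, hright⟩).continuousWithinAt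
  have hψcont : ContinuousOn ψ (Set.Ici 0) := fun τ hτ => hψcontW τ hτ
  -- Part 1 : FTC for Φ
  have hψt : Continuous (fun s : ℝ => ψ (max s 0)) := by
    apply hψcont.comp_continuous (continuous_id.max continuous_const)
    intro x
    exact Set.mem_Ici.2 (le_max_right x 0)
  have part1 : ∀ τ ∈ Set.Ici (0:ℝ),
      HasDerivWithinAt (fun τ' => ∫ s in (0:ℝ)..τ', ψ s) (ψ τ) (Set.Ici 0) τ := by
    intro τ hτ
    have h1 : HasDerivAt (fun τ' : ℝ => ∫ s in (0:ℝ)..τ', ψ (max s 0)) (ψ (max τ 0)) τ :=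
      (hψt.integral_hasStrictDerivAt 0 τ).hasDerivAt
    rw [max_eq_left hτ] at h1
    apply h1.hasDerivWithinAt.congr
    · intro y hy
      apply intervalIntegral.integral_congr
      intro s hs
      rw [Set.uIcc_of_le (Set.mem_Ici.1 hy)] at hs
      simp only [max_eq_left hs.1]
    · apply intervalIntegral.integral_congr
      intro s hs
      rw [Set.uIcc_of_le (Set.mem_Ici.1 hτ)] at hs
      simp only [max_eq_left hs.1]
  -- Part 2 : ψ → ∞
  have part2 : Filter.Tendsto ψ Filter.atTop Filter.atTop := by
    rw [Filter.tendsto_atTop]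
    intro b
    have hb1 : (1:ℝ) ≤ max b 1 := le_max_right _ _
    have hN : 0 ≤ phiW μ (max b 1) := hφ0 _ hb1
    filter_upwards [Filter.eventually_ge_atTop (phiW μ (max b 1))] with x hx
    have hx0 : (0:ℝ) ≤ x := hN.trans hx
    have h2 := hψmono.monotoneOn (Set.mem_Ici.2 hN) (Set.mem_Ici.2 hx0) hx
    rw [hψ₂ _ hb1] at h2
    exact le_trans (le_max_left b 1) h2
  -- Part 3 : derivative of ψ
  have part3 : ∀ τ ∈ Set.Ici (0:ℝ),
      HasDerivWithinAt ψ ((ψ τ)^2 * μ (1 / ψ τ)) (Set.Ici 0) τ := by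
    intro τ hτ
    set t₀ := ψ τ with ht₀def
    have ht₀1 : (1:ℝ) ≤ t₀ := hψmem τ hτ
    have ht₀pos : (0:ℝ) < t₀ := lt_of_lt_of_le one_pos ht₀1
    set x₀ := 1/t₀ with hx₀def
    have hx₀pos : 0 < x₀ := by positivity
    have hx₀le : x₀ ≤ 1 := (div_le_one ht₀pos).2 ht₀1
    have hμx₀ : 0 < μ x₀ := hμpos x₀ ⟨hx₀pos, hx₀le⟩
    -- clamped integrand, continuous on all of ℝ
    set c0 : ℝ := x₀/2 with hc0def
    have hc0pos : 0 < c0 := by positivity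
    have hc0le1 : c0 ≤ 1 := le_trans (by linarith) hx₀le
    set cl : ℝ → ℝ := fun x => min (max x c0) 1 with hcldef
    have hclmem : ∀ x, cl x ∈ Set.Icc c0 1 :=
      fun x => ⟨le_min (le_max_right _ _) hc0le1, min_le_right _ _⟩
    have hcleq : ∀ x, c0 ≤ x → x ≤ 1 → cl x = x := by
      intro x h1 h2
      simp only [hcldef, max_eq_left h1, min_eq_left h2]
    have hclcont : Continuous cl := (continuous_id.max continuous_const).min continuous_const
    have hμclpos : ∀ x, 0 < μ (cl x) :=
      fun x => hμpos _ ⟨lt_of_lt_of_le hc0pos (hclmem x).1, (hclmem x).2⟩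
    have hgt : Continuous (fun x => 1 / μ (cl x)) := by
      apply Continuous.div continuous_const
      · exact μ.continuousOn.comp_continuous hclcont
          (fun x => ⟨hc0pos.le.trans (hclmem x).1, (hclmem x).2⟩)
      · exact fun x => (hμclpos x).ne'
    set gt : ℝ → ℝ := fun x => 1 / μ (cl x) with hgtdef
    -- derivative of the clamped primitive
    have hF : HasDerivAt (fun u : ℝ => ∫ x in u..(1:ℝ), gt x) (-(gt x₀)) x₀ :=
      (intervalIntegral.integral_hasStrictDerivAt_left (hgt.intervalIntegrable _ _)
        (hgt.stronglyMeasurableAtFilter _ _) hgt.continuousAt).hasDerivAt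
    have hinv : HasDerivAt (fun t : ℝ => 1/t) (-(1/t₀^2)) t₀ := by
      simpa [one_div] using hasDerivAt_inv ht₀pos.ne'
    have hφt : HasDerivAt (fun t : ℝ => ∫ x in (1/t)..(1:ℝ), gt x) (gt x₀ / t₀^2) t₀ := by
      have hcomp := hF.comp t₀ hinv
      have : -gt x₀ * -(1/t₀^2) = gt x₀ / t₀^2 := by field_simp
      rw [this] at hcomp
      exact hcomp
    -- transfer to phiW within Icc 1 (2t₀)
    have hclg : ∀ y : ℝ, y ∈ Set.Icc (1:ℝ) (2*t₀) →
        phiW μ y = ∫ x in (1/y)..(1:ℝ), gt x := by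
      intro y hy
      have hypos : (0:ℝ) < y := lt_of_lt_of_le one_pos hy.1
      have hyle : (1:ℝ)/y ≤ 1 := (div_le_one hypos).2 hy.1
      apply intervalIntegral.integral_congr
      intro s hs
      rw [Set.uIcc_of_le hyle] at hs
      have hc0y : c0 ≤ 1/y := by
        rw [hc0def, hx₀def]
        rw [div_div]
        exact one_div_le_one_div_of_le hypos (by linarith [hy.2])
      have h1 : c0 ≤ s := hc0y.trans hs.1
      show 1 / μ s = gt s
      rw [hgtdef]
      simp only [hcleq s h1 hs.2]
    have ht₀mem : t₀ ∈ Set.Icc (1:ℝ) (2*t₀) := ⟨ht₀1, by linarith⟩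
    have h2 : HasDerivWithinAt (phiW μ) (gt x₀ / t₀^2) (Set.Icc 1 (2*t₀)) t₀ :=
      (hφt.hasDerivWithinAt).congr hclg (hclg t₀ ht₀mem)
    have hmem : Set.Icc (1:ℝ) (2*t₀) ∈ nhdsWithin t₀ (Set.Ici 1) := by
      rw [← Set.Ici_inter_Iic]
      exact Filter.inter_mem self_mem_nhdsWithin
        (mem_nhdsWithin_of_mem_nhds (Iic_mem_nhds (by linarith)))
    have hφW : HasDerivWithinAt (phiW μ) (gt x₀ / t₀^2) (Set.Ici 1) t₀ :=
      h2.mono_of_mem_nhdsWithin hmem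
    -- value of gt at x₀
    have hgtx₀ : gt x₀ = 1 / μ x₀ := by
      rw [hgtdef]; simp only [hcleq x₀ (by linarith) hx₀le]
    have hcne : gt x₀ / t₀^2 ≠ 0 := by
      rw [hgtx₀]; positivity
    -- inverse function derivative via slopes
    have hgoal : HasDerivWithinAt ψ ((gt x₀ / t₀^2)⁻¹) (Set.Ici 0) τ := by
      rw [hasDerivWithinAt_iff_tendsto_slope] at hφW ⊢
      have hmaps : Filter.Tendsto ψ (nhdsWithin τ (Set.Ici 0 \ {τ}))
          (nhdsWithin t₀ (Set.Ici 1 \ {t₀})) := by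
        rw [tendsto_nhdsWithin_iff]
        constructor
        · exact (hψcontW τ hτ).mono Set.diff_subset
        · filter_upwards [self_mem_nhdsWithin] with x hx
          refine ⟨Set.mem_Ici.2 (hψmem x hx.1), ?_⟩
          intro hcontra
          exact hx.2 (hψmono.injOn hx.1 hτ hcontra)
      have hslope := (hφW.comp hmaps).inv₀ hcne
      apply hslope.congr'
      filter_upwards [self_mem_nhdsWithin] with x hx
      have hx0 : x ∈ Set.Ici (0:ℝ) := hx.1
      show (slope (phiW μ) t₀ (ψ x))⁻¹ = slope ψ τ x
      rw [slope_def_field, slope_def_field, hψinv x hx0, ht₀def, hψinv τ hτ, inv_div]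
    have hval : (gt x₀ / t₀^2)⁻¹ = t₀^2 * μ x₀ := by
      rw [hgtx₀]
      field_simp
    rw [hval] at hgoal
    exact hgoal
  -- Part 4 : ψ² μ(1/ψ) → ∞
  have part4 : Filter.Tendsto (fun τ => (ψ τ)^2 * μ (1 / ψ τ)) Filter.atTop Filter.atTop := by
    apply Filter.tendsto_atTop_mono' _ _ (part2.atTop_mul_const hμ1)
    filter_upwards [Filter.eventually_ge_atTop (0:ℝ)] with x hx
    have hT1 : (1:ℝ) ≤ ψ x := hψmem x hx
    have hTpos : (0:ℝ) < ψ x := lt_of_lt_of_le one_pos hT1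
    have hmem : (1:ℝ)/ψ x ∈ Set.Icc (0:ℝ) 1 :=
      ⟨by positivity, (div_le_one hTpos).2 hT1⟩
    have hlow := hμlow _ hmem
    have h1 : ψ x * μ 1 = (ψ x)^2 * (1/ψ x * μ 1) := by
      field_simp
    rw [h1]
    exact mul_le_mul_of_nonneg_left hlow (sq_nonneg _)
  exact ⟨part1, part2, part3, part4⟩
end
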